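/- Let N ≥ 3 be an integer and let θ be a real number with 0 < θ ≤ π/2. Let P be a finite set of unit vectors in ℝ^N that is (θ/6)-dense, i.e., every unit vector in ℝ^N is at geodesic distance at most θ/6 from some element of P. Then for every unit vector v ∈ ℝ^N, the number of elements p ∈ P with ∠(v,p) ≤ θ/2 is at least N. -/

import Mathlib

/-!
Tilt `v` by the angle `α = θ / 3` towards `N` unit directions `s i` orthogonal to `v` with
pairwise non-positive inner products (an orthonormal basis of `vᗮ` together with the negative of
its first vector). The tilted vectors `w i = cos α • v + sin α • s i` lie at angle `α` from `v`
and at pairwise angle `> α`, since `⟪w i, w j⟫ ≤ cos² α < cos α`. A `θ / 6`-close point of `P`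
to each `w i` then lies within `θ / 3 + θ / 6 = θ / 2` of `v`, and by the triangle inequality
for angles no two `w i` share one.
-/

open Real
open scoped Classical

/-- Geodesic (great-circle) distance between unit vectors in `ℝ^N`:
the angle `arccos ⟨u, v⟩ ∈ [0, π]`. -/
noncomputable def geodesicDist {N : ℕ} (u v : EuclideanSpace ℝ (Fin N)) : ℝ :=
  Real.arccos (inner ℝ u v : ℝ)

open InnerProductGeometry Module Finset
open scoped RealInnerProductSpace

section

variable {E : Type*} [NormedAddCommGroup E] [InnerProductSpace ℝ E]

section Tilt

variable {v s t : E} (hv : ‖v‖ = 1) (hvs : ⟪v, s⟫ = 0) (α : ℝ)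
include hv hvs

lemma inner_cos_smul_add_sin_smul_left : ⟪v, cos α • v + sin α • s⟫ = cos α := by
  simp [inner_add_right, real_inner_smul_right, hvs, hv]

lemma inner_cos_smul_add_sin_smul (hvt : ⟪v, t⟫ = 0) :
    ⟪cos α • v + sin α • s, cos α • v + sin α • t⟫ = cos α ^ 2 + sin α ^ 2 * ⟪s, t⟫ := by
  have hvv : ⟪v, v⟫ = 1 := by simp [hv]
  simp only [inner_add_left, inner_add_right, real_inner_smul_left, real_inner_smul_right,
    hvv, hvs, hvt, real_inner_comm v s]
  ring

lemma norm_cos_smul_add_sin_smul (hs : ‖s‖ = 1) : ‖cos α • v + sin α • s‖ = 1 := by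
  have h := inner_cos_smul_add_sin_smul hv hvs α hvs
  rw [real_inner_self_eq_norm_sq, real_inner_self_eq_norm_sq, hs, one_pow, mul_one,
    cos_sq_add_sin_sq] at h
  exact (pow_eq_one_iff_of_nonneg (norm_nonneg _) two_ne_zero).mp h

lemma angle_cos_smul_add_sin_smul (hs : ‖s‖ = 1) (hα₀ : 0 ≤ α) (hαπ : α ≤ π) :
    angle v (cos α • v + sin α • s) = α := by
  rw [angle, inner_cos_smul_add_sin_smul_left hv hvs, hv, norm_cos_smul_add_sin_smul hv hvs α hs,
    mul_one, div_one, arccos_cos hα₀ hαπ]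

lemma lt_angle_cos_smul_add_sin_smul (hvt : ⟪v, t⟫ = 0) (hs : ‖s‖ = 1) (ht : ‖t‖ = 1)
    (hst : ⟪s, t⟫ ≤ 0) (hα₀ : 0 < α) (hα : α < π / 2) :
    α < angle (cos α • v + sin α • s) (cos α • v + sin α • t) := by
  have hws := norm_cos_smul_add_sin_smul hv hvs α hs
  have hwt := norm_cos_smul_add_sin_smul hv hvt α ht
  have hcos₀ : 0 < cos α := cos_pos_of_mem_Ioo ⟨by linarith, hα⟩
  have hcos₁ : cos α < 1 := by
    simpa using cos_lt_cos_of_nonneg_of_le_pi le_rfl (by linarith) hα₀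
  have hinner : ⟪cos α • v + sin α • s, cos α • v + sin α • t⟫ < cos α := by
    rw [inner_cos_smul_add_sin_smul hv hvs α hvt]
    nlinarith [mul_nonpos_of_nonneg_of_nonpos (sq_nonneg (sin α)) hst]
  rw [angle, hws, hwt, mul_one, div_one]
  calc α = arccos (cos α) := (arccos_cos hα₀.le (by linarith)).symm
    _ < _ := arccos_lt_arccos (neg_one_le_real_inner_of_norm_eq_one hws hwt) hinner hcos₁.le

end Tilt

lemma Orthonormal.pairwise_inner_cons_neg_nonpos {n : ℕ} {e : Fin (n + 1) → E}
    (he : Orthonormal ℝ e) :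
    Pairwise fun i j => ⟪Matrix.vecCons (-e 0) e i, Matrix.vecCons (-e 0) e j⟫ ≤ 0 := by
  have inner_nonneg (i j) : 0 ≤ ⟪e i, e j⟫ := by
    rw [orthonormal_iff_ite.mp he]; split_ifs <;> norm_num
  intro i j hij
  cases i using Fin.cases <;> cases j using Fin.cases
  · exact absurd rfl hij
  · simpa [inner_neg_left] using inner_nonneg _ _
  · simpa [inner_neg_right] using inner_nonneg _ _
  · simp only [Matrix.cons_val_succ]
    exact (he.inner_eq_zero (fun h => hij (congrArg _ h))).le

lemma exists_orthogonal_pairwise_inner_nonpos [FiniteDimensional ℝ E] {n : ℕ}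
    (hE : finrank ℝ E = n + 2) {v : E} (hv : v ≠ 0) :
    ∃ s : Fin (n + 2) → E, (∀ i, ‖s i‖ = 1) ∧ (∀ i, ⟪v, s i⟫ = 0) ∧
      Pairwise fun i j => ⟪s i, s j⟫ ≤ 0 := by
  have : Fact (finrank ℝ E = (n + 1) + 1) := ⟨hE⟩
  set b := OrthonormalBasis.fromOrthogonalSpanSingleton (𝕜 := ℝ) (n + 1) hv
  set e : Fin (n + 1) → E := fun i => b i
  have he : Orthonormal ℝ e := b.orthonormal.comp_linearIsometry (Submodule.subtypeₗᵢ _)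
  have hperp (i) : ⟪v, e i⟫ = 0 :=
    Submodule.inner_right_of_mem_orthogonal (Submodule.mem_span_singleton_self v) (b i).2
  refine ⟨Matrix.vecCons (-e 0) e, fun i => ?_, fun i => ?_, he.pairwise_inner_cons_neg_nonpos⟩
  · cases i using Fin.cases <;> simp [he.1]
  · cases i using Fin.cases <;> simp [inner_neg_right, hperp]

lemma exists_unit_family_angle_eq_pairwise_lt_angle [FiniteDimensional ℝ E] {n : ℕ}
    (hE : finrank ℝ E = n + 2) {v : E} (hv : ‖v‖ = 1) {α : ℝ} (hα₀ : 0 < α) (hα : α < π / 2) :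
    ∃ w : Fin (n + 2) → E, (∀ i, ‖w i‖ = 1) ∧ (∀ i, angle v (w i) = α) ∧
      Pairwise fun i j => α < angle (w i) (w j) := by
  obtain ⟨s, hs, hvs, hst⟩ :=
    exists_orthogonal_pairwise_inner_nonpos hE (norm_ne_zero_iff.mp (hv ▸ one_ne_zero))
  refine ⟨fun i => cos α • v + sin α • s i, fun i => norm_cos_smul_add_sin_smul hv (hvs i) α (hs i),
    fun i => angle_cos_smul_add_sin_smul hv (hvs i) α (hs i) hα₀.le (by linarith [pi_pos]),
    fun i j hij => lt_angle_cos_smul_add_sin_smul hv (hvs i) α (hvs j) (hs i) (hs j) (hst hij) hα₀ hα⟩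

lemma card_le_card_filter_angle_le {ι : Type*} [Fintype ι] {P : Finset E} {v : E} {w : ι → E}
    {a r : ℝ} (hnear : ∀ i, ∃ p ∈ P, angle (w i) p ≤ r) (hwv : ∀ i, angle v (w i) ≤ a)
    (hsep : Pairwise fun i j => 2 * r < angle (w i) (w j)) :
    Fintype.card ι ≤ #{p ∈ P | angle v p ≤ a + r} := by
  choose f hfP hfw using hnear
  refine card_le_card_of_injOn f (fun i _ => mem_filter.mpr ⟨hfP i, ?_⟩) fun i _ j _ hij => ?_
  · linarith [angle_le_angle_add_angle v (w i) (f i), hwv i, hfw i]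
  · by_contra hne
    have hfij : angle (f i) (w j) = angle (w j) (f j) := by rw [angle_comm, hij]
    linarith [angle_le_angle_add_angle (w i) (f i) (w j), hsep hne, hfw i, hfw j]

end

lemma geodesicDist_eq_angle {N : ℕ} {u v : EuclideanSpace ℝ (Fin N)} (hu : ‖u‖ = 1)
    (hv : ‖v‖ = 1) : geodesicDist u v = angle u v := by
  rw [geodesicDist, angle, hu, hv, mul_one, div_one]

theorem cap_contains_at_least_N_directions (N : ℕ) (hN : 3 ≤ N)
    (θ : ℝ) (hθ : 0 < θ) (hθ2 : θ ≤ π / 2)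
    (P : Finset (EuclideanSpace ℝ (Fin N)))
    (hunit : ∀ p ∈ P, ‖p‖ = 1)
    (hdense : ∀ v : EuclideanSpace ℝ (Fin N), ‖v‖ = 1 →
      ∃ p ∈ P, geodesicDist v p ≤ θ / 6)
    (v : EuclideanSpace ℝ (Fin N)) (hv : ‖v‖ = 1) :
    N ≤ (P.filter (fun p => geodesicDist v p ≤ θ / 2)).card := by
  obtain ⟨n, rfl⟩ : ∃ n, N = n + 2 := ⟨N - 2, by omega⟩
  obtain ⟨w, hw, hvw, hsep⟩ := exists_unit_family_angle_eq_pairwise_lt_angle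
    finrank_euclideanSpace_fin hv (α := θ / 3) (by positivity) (by linarith [pi_pos])
  have hnear (i) : ∃ p ∈ P, angle (w i) p ≤ θ / 6 := by
    obtain ⟨p, hp, hd⟩ := hdense (w i) (hw i)
    exact ⟨p, hp, geodesicDist_eq_angle (hw i) (hunit p hp) ▸ hd⟩
  have hcount := card_le_card_filter_angle_le hnear (fun i => (hvw i).le)
    fun i j hij => by linarith [hsep hij]
  rw [Fintype.card_fin, show θ / 3 + θ / 6 = θ / 2 by ring] at hcount
  convert hcount using 2
  exact filter_congr fun p hp => by rw [geodesicDist_eq_angle hv (hunit p hp)]
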